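/- Let G = (V,E,o) be a finite rooted graph, n ≥ 4, and G_n = (V_n,E_n) the augmented ball graph. Suppose μ ∈ P(X^V) has density with respect to a product measure μ* = ∏_v θ_v of the form dμ/dμ*(x) = ∏_{K∈cl₂(G)} f_K(x_K). Then the marginal μ[V_n] on X^{V_n} has density with respect to μ*[V_n] of the form ∏_{K∈cl₂(G_n)} f⁰_K(x_K), where moreover f⁰_K = f_K for every K ∈ cl₂(G) with K ⊆ V_{n-3}. -/

import Mathlib

open MeasureTheory ProbabilityTheory

section GraphDefs

variable {V : Type*}

/-- The (first) outer boundary of a set of vertices. -/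
def graphBdry (G : SimpleGraph V) (A : Set V) : Set V :=
  {u | u ∉ A ∧ ∃ v ∈ A, G.Adj u v}

/-- The second (double) boundary of a set of vertices. -/
def graphBdry2 (G : SimpleGraph V) (A : Set V) : Set V :=
  graphBdry G A ∪ graphBdry G (A ∪ graphBdry G A)

/-- The square graph: vertices at graph distance 1 or 2 are joined. -/
def sqGraph (G : SimpleGraph V) : SimpleGraph V where
  Adj u v := u ≠ v ∧ G.Reachable u v ∧ G.dist u v ≤ 2
  symm := by
    constructor
    rintro u v ⟨h1, h2, h3⟩
    exact ⟨h1.symm, h2.symm, by rwa [SimpleGraph.dist_comm]⟩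
  loopless := by constructor; rintro u ⟨h, -⟩; exact h rfl

/-- A 2-clique: a set of vertices of diameter at most 2. -/
def TwoClique (G : SimpleGraph V) (K : Set V) : Prop :=
  ∀ u ∈ K, ∀ v ∈ K, u ≠ v → G.Reachable u v ∧ G.dist u v ≤ 2

open scoped Classical in
/-- The finite collection of 2-cliques of a graph on a finite vertex set. -/
noncomputable def cl2Finset (G : SimpleGraph V) [Fintype V] : Finset (Finset V) :=
  Finset.univ.filter fun K => TwoClique G (K : Set V)

end GraphDefs


/-- The ball of radius `n` around the root `o` in `G`. -/
def gball {V : Type*} (G : SimpleGraph V) (o : V) (n : ℕ) : Set V :=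
  {v | G.Reachable o v ∧ G.dist o v ≤ n}

/-- The augmented ball graph `G_n`: the edges of `G` inside the ball `V_n` of radius `n`
about the root, together with all pairs of distinct vertices of the annulus
`U_n = V_n \ V_{n-2}`. -/
def augGraph {V : Type*} (G : SimpleGraph V) (o : V) (n : ℕ) : SimpleGraph V where
  Adj u v := (u ∈ gball G o n ∧ v ∈ gball G o n ∧ G.Adj u v) ∨
    (u ∈ gball G o n \ gball G o (n - 2) ∧ v ∈ gball G o n \ gball G o (n - 2) ∧ u ≠ v)
  symm := by
    constructor
    rintro u v (⟨h1, h2, h3⟩ | ⟨h1, h2, h3⟩)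
    · exact Or.inl ⟨h2, h1, h3.symm⟩
    · exact Or.inr ⟨h2, h1, h3.symm⟩
  loopless := by
    constructor
    rintro u (⟨-, -, h⟩ | ⟨-, -, h⟩)
    · exact G.loopless.irrefl u h
    · exact h rfl

open scoped ENNReal

/-!
Split the 2-cliques of `G` into those contained in the ball `V_n` and the others. A 2-clique that
leaves `V_n` misses `V_{n-2}`, so integrating the product of its factors over the coordinates
outside `V_n` leaves a function of `x_{U_n}` alone, which is absorbed into the factor of a 2-clique
`K₀ ⊇ U_n` of `G_n`. A 2-clique of `G` inside `V_n` is still a 2-clique of `G_n`: a path of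
length two starting in `V_{n-2}` stays in `V_n`, and any two vertices of `U_n` are adjacent in
`G_n`; it keeps its own factor. Finally `K₀` can be taken outside `V_{n-3}` unless every
2-clique lies in `V_n`, and then the absorbed function is `1`.
-/

section Retraction

variable {ι X β : Type*} {s : Set ι} {r : ι → s}

lemma comp_retraction_apply (hr : ∀ i : s, r i = i) (a : s → X) {i : ι} (hi : i ∈ s) :
    (a ∘ r) i = a ⟨i, hi⟩ :=
  congrArg a (hr ⟨i, hi⟩)

lemma DependsOn.comp_retraction {F : (ι → X) → β} {u : Set ι} (hF : DependsOn F u)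
    (hr : ∀ i : s, r i = i) (hu : u ⊆ s) :
    DependsOn (fun a : s → X => F (a ∘ r)) {i : s | ↑i ∈ u} := fun a a' h => hF fun i hi => by
  rw [comp_retraction_apply hr a (hu hi), comp_retraction_apply hr a' (hu hi)]
  exact h _ hi

lemma DependsOn.domRestrict_comp_retraction {F : (ι → X) → β} {u : Set ι} (hF : DependsOn F u)
    (hr : ∀ i : s, r i = i) (hu : u ⊆ s) (x : ι → X) : F (s.domRestrict x ∘ r) = F x :=
  hF fun _ hi => comp_retraction_apply hr (s.domRestrict x) (hu hi)

end Retraction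

section Glue

variable {ι X : Type*}

lemma dependsOn_finset_prod {α : ι → Type*} {κ M : Type*} [CommMonoid M] (S : Finset κ)
    {F : κ → (Π i, α i) → M} {u : κ → Set ι} (hF : ∀ K ∈ S, DependsOn (F K) (u K)) :
    DependsOn (fun x => ∏ K ∈ S, F K x) (⋃ K ∈ S, u K) := fun _ _ h =>
  Finset.prod_congr rfl fun K hK => hF K hK fun i hi => h i (Set.mem_biUnion hK hi)

def piGlue (s : Set ι) [DecidablePred (· ∈ s)] (a : s → X) (b : {i // i ∉ s} → X) : ι → X :=
  (Equiv.piEquivPiSubtypeProd (· ∈ s) (fun _ : ι => X)).symm (a, b)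

lemma piGlue_of_mem (s : Set ι) [DecidablePred (· ∈ s)] (a : s → X) (b : {i // i ∉ s} → X)
    (i : s) : piGlue s a b i = a i :=
  dif_pos i.2

end Glue

section Marginal

variable {ι X : Type*} [MeasurableSpace X] (s : Set ι) [DecidablePred (· ∈ s)]

lemma measurable_piGlue : Measurable fun p : (s → X) × ({i // i ∉ s} → X) => piGlue s p.1 p.2 :=
  (MeasurableEquiv.piEquivPiSubtypeProd (fun _ : ι => X) (· ∈ s)).symm.measurable

lemma DependsOn.lintegral_piGlue {F : (ι → X) → ℝ≥0∞} {u : Set ι} (hF : DependsOn F u)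
    (ν : Measure ({i // i ∉ s} → X)) :
    DependsOn (fun a => ∫⁻ b, F (piGlue s a b) ∂ν) {i : s | (i : ι) ∈ u} := by
  intro a a' h
  refine lintegral_congr fun b => hF fun i hi => ?_
  by_cases his : i ∈ s
  · rw [piGlue_of_mem s a b ⟨i, his⟩, piGlue_of_mem s a' b ⟨i, his⟩]
    exact h ⟨i, his⟩ hi
  · simp [piGlue, his]

open Classical in
theorem lintegral_prod_piGlue_eq_mul (ν : Measure ({i // i ∉ s} → X)) (S : Finset (Finset ι))
    {f : Finset ι → (ι → X) → ℝ≥0∞} (hf : ∀ K, Measurable (f K)) (hdep : ∀ K, DependsOn (f K) K)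
    {r : ι → s} (hr : ∀ i : s, r i = i) (a : s → X) :
    ∫⁻ b, ∏ K ∈ S, f K (piGlue s a b) ∂ν =
      (∏ K ∈ S with ↑K ⊆ s, f K (a ∘ r)) *
        ∫⁻ b, ∏ K ∈ S with ¬↑K ⊆ s, f K (piGlue s a b) ∂ν := by
  have hinner : ∀ K ∈ S.filter (↑· ⊆ s), ∀ b, f K (piGlue s a b) = f K (a ∘ r) :=
    fun K hK b => hdep K fun i hi => by
      have his : i ∈ s := (Finset.mem_filter.1 hK).2 hi
      rw [piGlue_of_mem s a b ⟨i, his⟩, comp_retraction_apply hr a his]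
  simp_rw [← Finset.prod_filter_mul_prod_filter_not S (↑· ⊆ s),
    Finset.prod_congr rfl (hinner · · _)]
  exact lintegral_const_mul _ <| Finset.measurable_prod _ fun K _ =>
    (hf K).comp ((measurable_piGlue s).comp measurable_prodMk_left)

variable [Fintype ι] (θ : ι → Measure X) [∀ i, SigmaFinite (θ i)]

theorem map_domRestrict_pi_withDensity {g : (ι → X) → ℝ≥0∞} (hg : Measurable g) :
    ((Measure.pi θ).withDensity g).map s.domRestrict =
      (Measure.pi fun i : s => θ i).withDensity fun a =>
        ∫⁻ b, g (piGlue s a b) ∂Measure.pi fun i : {i // i ∉ s} => θ i := by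
  set e := MeasurableEquiv.piEquivPiSubtypeProd (fun _ : ι => X) (· ∈ s)
  have hmp := measurePreserving_piEquivPiSubtypeProd θ (· ∈ s)
  ext t ht
  have hpre : s.domRestrict ⁻¹' t = e ⁻¹' (t ×ˢ Set.univ) := by ext; simp [e]; rfl
  have hG : Measurable fun z : (s → X) × _ => g (piGlue s z.1 z.2) := hg.comp (measurable_piGlue s)
  rw [Measure.map_apply (Set.measurable_restrict s) ht, withDensity_apply _ ht,
    withDensity_apply _ (Set.measurable_restrict s ht), hpre]
  calc ∫⁻ x in e ⁻¹' (t ×ˢ Set.univ), g x ∂Measure.pi θ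
      = ∫⁻ x in e ⁻¹' (t ×ˢ Set.univ), g (piGlue s (e x).1 (e x).2) ∂Measure.pi θ :=
        lintegral_congr fun x => congrArg g (e.symm_apply_apply x).symm
    _ = ∫⁻ z in t ×ˢ Set.univ, g (piGlue s z.1 z.2) ∂(Measure.pi fun i : s => θ i).prod
          (Measure.pi fun i : {i // i ∉ s} => θ i) :=
        hmp.setLIntegral_comp_preimage_emb e.measurableEmbedding (fun z => g (piGlue s z.1 z.2)) _
    _ = _ := by rw [setLIntegral_prod _ hG.aemeasurable, Measure.restrict_univ]

open Classical in
theorem map_domRestrict_pi_withDensity_prod (S : Finset (Finset ι))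
    {f : Finset ι → (ι → X) → ℝ≥0∞} (hf : ∀ K, Measurable (f K))
    (hdep : ∀ K, DependsOn (f K) K) {r : ι → s} (hr : ∀ i : s, r i = i) :
    ((Measure.pi θ).withDensity fun x => ∏ K ∈ S, f K x).map s.domRestrict =
      (Measure.pi fun i : s => θ i).withDensity fun a =>
        (∏ K ∈ S with ↑K ⊆ s, f K (a ∘ r)) *
          ∫⁻ b, ∏ K ∈ S with ¬↑K ⊆ s, f K (piGlue s a b)
            ∂Measure.pi fun i : {i // i ∉ s} => θ i := by
  rw [map_domRestrict_pi_withDensity s θ (Finset.measurable_prod _ fun K _ => hf K)]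
  simp_rw [lintegral_prod_piGlue_eq_mul s _ S hf hdep hr]

end Marginal

open Classical in
theorem exists_marginal_factorization {ι X : Type*} [MeasurableSpace X] [Fintype ι]
    (θ : ι → Measure X) [∀ i, IsProbabilityMeasure (θ i)] {s : Set ι} (hs : s.Nonempty)
    (S T : Finset (Finset ι)) {f : Finset ι → (ι → X) → ℝ≥0∞} (hf : ∀ K, Measurable (f K))
    (hdep : ∀ K, DependsOn (f K) K) (hST : ∀ K ∈ S, ↑K ⊆ s → K ∈ T) {K₀ : Finset ι}
    (hK₀ : K₀ ∈ T) (hK₀S : ∀ K ∈ S, ¬↑K ⊆ s → ↑K ∩ s ⊆ ↑K₀) :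
    ∃ f0 : Finset ι → (s → X) → ℝ≥0∞, (∀ K, Measurable (f0 K)) ∧
      (∀ K, DependsOn (f0 K) {i : s | ↑i ∈ K}) ∧
      ((Measure.pi θ).withDensity fun x => ∏ K ∈ S, f K x).map s.domRestrict =
        (Measure.pi fun i : s => θ i).withDensity (fun a => ∏ K ∈ T, f0 K a) ∧
      ∀ K ∈ S, ↑K ⊆ s → (K = K₀ → ∀ K' ∈ S, ↑K' ⊆ s) → ∀ x, f0 K (s.domRestrict x) = f K x := by
  set r : ι → s := fun i => if h : i ∈ s then ⟨i, h⟩ else ⟨hs.some, hs.some_mem⟩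
  have hr : ∀ i : s, r i = i := fun i => dif_pos i.2
  set S₁ := S.filter (↑· ⊆ s)
  set S₂ := S.filter (¬↑· ⊆ s)
  set H : (s → X) → ℝ≥0∞ := fun a =>
    ∫⁻ b, ∏ K ∈ S₂, f K (piGlue s a b) ∂Measure.pi fun i : {i // i ∉ s} => θ i
  have hHm : Measurable H := Measurable.lintegral_prod_right' <|
    Finset.measurable_prod _ fun K _ => (hf K).comp (measurable_piGlue s)
  have hHdep : DependsOn H {i : s | ↑i ∈ K₀} :=
    ((dependsOn_finset_prod S₂ fun K _ => hdep K).lintegral_piGlue s _).mono fun i hi => by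
      obtain ⟨K, hK, hiK⟩ := Set.mem_iUnion₂.1 hi
      obtain ⟨hKS, hKs⟩ := Finset.mem_filter.1 hK
      exact hK₀S K hKS hKs ⟨hiK, i.2⟩
  have hH (hS : ∀ K ∈ S, ↑K ⊆ s) (a : s → X) : H a = 1 := by
    have : S₂ = ∅ := Finset.filter_false_of_mem fun K hK hKs => hKs (hS K hK)
    simp [H, this]
  refine ⟨fun K a => (if K ∈ S₁ then f K (a ∘ r) else 1) * (if K = K₀ then H a else 1),
    fun K => ?_, fun K x y hxy => ?_, ?_, fun K hK hKs hKK₀ x => ?_⟩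
  · refine Measurable.mul ?_ ?_ <;> split_ifs
    exacts [(hf K).comp (measurable_pi_lambda _ fun i => measurable_pi_apply (r i)),
      measurable_const, hHm, measurable_const]
  · beta_reduce
    congr 1
    · split_ifs with h
      exacts [(hdep K).comp_retraction hr (Finset.mem_filter.1 h).2 hxy, rfl]
    · split_ifs with h
      exacts [hHdep fun i hi => hxy i (h ▸ hi), rfl]
  · refine (map_domRestrict_pi_withDensity_prod s θ S hf hdep hr).trans ?_
    have hS₁ : S₁ ⊆ T := fun K hK => hST K (Finset.mem_filter.1 hK).1 (Finset.mem_filter.1 hK).2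
    congr 1
    funext a
    rw [Finset.prod_mul_distrib, Finset.prod_ite_mem, Finset.inter_eq_right.2 hS₁,
      Finset.prod_ite_eq', if_pos hK₀]
  · have hKS₁ : K ∈ S₁ := Finset.mem_filter.2 ⟨hK, hKs⟩
    have hH₀ : (if K = K₀ then H (s.domRestrict x) else 1) = 1 := by
      split_ifs with h
      exacts [hH (hKK₀ h) _, rfl]
    simp only [if_pos hKS₁, (hdep K).domRestrict_comp_retraction hr hKs, hH₀, mul_one]

section Graph

variable {V : Type*}

lemma mem_cl2Finset [Fintype V] {G : SimpleGraph V} {K : Finset V} :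
    K ∈ cl2Finset G ↔ TwoClique G (K : Set V) := by
  classical
  simp [cl2Finset]

lemma twoClique_of_subsingleton {H : SimpleGraph V} {K : Set V} (hK : K.Subsingleton) :
    TwoClique H K :=
  fun _ hu _ hv huv => (huv (hK hu hv)).elim

lemma SimpleGraph.Walk.reachable_and_dist_le {H : SimpleGraph V} {u v : V} (p : H.Walk u v)
    {k : ℕ} (hp : p.length ≤ k) : H.Reachable u v ∧ H.dist u v ≤ k :=
  ⟨p.reachable, (H.dist_le p).trans hp⟩

lemma SimpleGraph.adj_or_exists_adj_adj_of_dist_le_two {H : SimpleGraph V} {u v : V}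
    (hr : H.Reachable u v) (hne : u ≠ v) (hd : H.dist u v ≤ 2) :
    H.Adj u v ∨ ∃ w, H.Adj u w ∧ H.Adj w v := by
  obtain ⟨p, hp⟩ := hr.exists_walk_length_eq_dist
  match p, hp with
  | .nil, _ => exact absurd rfl hne
  | .cons h .nil, _ => exact .inl h
  | .cons h (.cons h' .nil), _ => exact .inr ⟨_, h, h'⟩
  | .cons _ (.cons _ (.cons _ _)), hp => simp only [SimpleGraph.Walk.length_cons] at hp; omega

variable (G : SimpleGraph V) (o : V)

lemma mem_gball_self (n : ℕ) : o ∈ gball G o n :=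
  ⟨.refl o, by simp⟩

lemma gball_mono {m n : ℕ} (h : m ≤ n) : gball G o m ⊆ gball G o n :=
  fun _ hv => ⟨hv.1, hv.2.trans h⟩

variable {G o}

lemma mem_gball_add_of_reachable {m k : ℕ} {u v : V} (hu : u ∈ gball G o m) (huv : G.Reachable u v)
    (hd : G.dist u v ≤ k) : v ∈ gball G o (m + k) :=
  ⟨hu.1.trans huv, (hu.1.dist_triangle_left v).trans (by have := hu.2; omega)⟩

lemma TwoClique.subset_gball {K : Set V} (hK : TwoClique G K) {m : ℕ} {u : V} (hu : u ∈ K)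
    (hum : u ∈ gball G o m) : K ⊆ gball G o (m + 2) := by
  intro v hv
  obtain rfl | huv := eq_or_ne u v
  · exact gball_mono G o (by omega) hum
  · exact mem_gball_add_of_reachable hum (hK u hu v hv huv).1 (hK u hu v hv huv).2

lemma augGraph_adj_of_adj {n : ℕ} {u v : V} (hu : u ∈ gball G o n) (hv : v ∈ gball G o n)
    (h : G.Adj u v) : (augGraph G o n).Adj u v :=
  .inl ⟨hu, hv, h⟩

lemma augGraph_adj_of_mem_annulus {n : ℕ} {u v : V} (hu : u ∈ gball G o n \ gball G o (n - 2))
    (hv : v ∈ gball G o n \ gball G o (n - 2)) (huv : u ≠ v) : (augGraph G o n).Adj u v :=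
  .inr ⟨hu, hv, huv⟩

lemma twoClique_augGraph_annulus (n : ℕ) :
    TwoClique (augGraph G o n) (gball G o n \ gball G o (n - 2)) := fun _ hu _ hv huv =>
  (augGraph_adj_of_mem_annulus hu hv huv).toWalk.reachable_and_dist_le (by simp)

lemma twoClique_augGraph_of_subset {K : Set V} (hK : TwoClique G K) {n : ℕ} (hn : 1 ≤ n)
    (hKn : K ⊆ gball G o n) : TwoClique (augGraph G o n) K := by
  have path {a b w : V} (ha : a ∈ gball G o (n - 2)) (hb : b ∈ gball G o n) (haw : G.Adj a w)
      (hwb : G.Adj w b) : (augGraph G o n).Reachable a b ∧ (augGraph G o n).dist a b ≤ 2 := by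
    have hw : w ∈ gball G o n := gball_mono G o (by omega)
      (mem_gball_add_of_reachable ha haw.reachable (G.dist_eq_one_iff_adj.mpr haw).le)
    have ha' := gball_mono G o (Nat.sub_le n 2) ha
    exact (SimpleGraph.Walk.cons (augGraph_adj_of_adj ha' hw haw)
      (augGraph_adj_of_adj hw hb hwb).toWalk).reachable_and_dist_le (by simp)
  intro u hu v hv huv
  obtain ⟨hr, hd⟩ := hK u hu v hv huv
  rcases G.adj_or_exists_adj_adj_of_dist_le_two hr huv hd with hadj | ⟨w, huw, hwv⟩
  · exact (augGraph_adj_of_adj (hKn hu) (hKn hv) hadj).toWalk.reachable_and_dist_le (by simp)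
  by_cases hu2 : u ∈ gball G o (n - 2)
  · exact path hu2 (hKn hv) huw hwv
  by_cases hv2 : v ∈ gball G o (n - 2)
  · rw [SimpleGraph.dist_comm]
    exact (path hv2 (hKn hu) hwv.symm huw.symm).imp_left .symm
  exact (twoClique_augGraph_annulus n) u ⟨hKn hu, hu2⟩ v ⟨hKn hv, hv2⟩ huv

variable (G o) in
lemma exists_mem_cl2Finset_augGraph_annulus_subset [Fintype V] (n : ℕ) :
    ∃ K₀ ∈ cl2Finset (augGraph G o n), gball G o n \ gball G o (n - 2) ⊆ K₀ ∧
      ((K₀ : Set V) ⊆ gball G o (n - 3) → ∀ v, v ∈ gball G o n) := by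
  classical
  by_cases hU : (gball G o n \ gball G o (n - 2)).Nonempty
  · obtain ⟨u, hu⟩ := hU
    refine ⟨(gball G o n \ gball G o (n - 2)).toFinset,
      mem_cl2Finset.2 (by simpa using twoClique_augGraph_annulus n), by simp, fun h => ?_⟩
    exact absurd (gball_mono G o (by omega) (h (by simpa using hu))) hu.2
  rw [Set.not_nonempty_iff_eq_empty] at hU
  by_cases hW : ∃ w, w ∉ gball G o n
  · obtain ⟨w, hw⟩ := hW
    exact ⟨{w}, mem_cl2Finset.2 (twoClique_of_subsingleton (by simp)), by simp [hU],
      fun h => absurd (gball_mono G o (by omega) (h (by simp))) hw⟩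
  · push Not at hW
    exact ⟨∅, mem_cl2Finset.2 (twoClique_of_subsingleton (by simp)), by simp [hU], fun _ => hW⟩

lemma TwoClique.inter_gball_subset_annulus {K : Set V} (hK : TwoClique G K) {n : ℕ} (hn : 2 ≤ n)
    (hKn : ¬K ⊆ gball G o n) : K ∩ gball G o n ⊆ gball G o n \ gball G o (n - 2) :=
  fun v ⟨hvK, hvn⟩ =>
    ⟨hvn, fun hv2 => hKn (by simpa [Nat.sub_add_cancel hn] using hK.subset_gball hvK hv2)⟩

end Graph

open scoped Classical in
theorem marginal_twoClique_factorization_general {V X : Type*} [Fintype V]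
    [MeasurableSpace X]
    (G : SimpleGraph V) (o : V) (n : ℕ) (hn : 4 ≤ n)
    (θ : V → Measure X) [∀ v, IsProbabilityMeasure (θ v)]
    (f : Finset V → (V → X) → ℝ≥0∞)
    (hfmeas : ∀ K, Measurable (f K))
    (hfloc : ∀ K, ∀ x y : V → X, (∀ v ∈ K, x v = y v) → f K x = f K y)
    (μ : Measure (V → X))
    (hμ : μ = (Measure.pi θ).withDensity (fun x => ∏ K ∈ cl2Finset G, f K x)) :
    ∃ f0 : Finset V → (↥(gball G o n) → X) → ℝ≥0∞,
      (∀ K, Measurable (f0 K)) ∧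
      (∀ K : Finset V, ∀ x y : ↥(gball G o n) → X,
        (∀ v : ↥(gball G o n), (v : V) ∈ K → x v = y v) → f0 K x = f0 K y) ∧
      μ.map (fun x (v : ↥(gball G o n)) => x (v : V)) =
        (Measure.pi fun v : ↥(gball G o n) => θ (v : V)).withDensity
          (fun x => ∏ K ∈ cl2Finset (augGraph G o n), f0 K x) ∧
      ∀ K ∈ cl2Finset G, (K : Set V) ⊆ gball G o (n - 3) →
        ∀ x : V → X, f0 K (fun v => x (v : V)) = f K x := by
  subst hμ
  obtain ⟨K₀, hK₀, hUK₀, hK₀small⟩ := exists_mem_cl2Finset_augGraph_annulus_subset G o n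
  obtain ⟨f0, hmeas, hloc, hmap, hpin⟩ := exists_marginal_factorization θ
    ⟨o, mem_gball_self G o n⟩ (cl2Finset G) (cl2Finset (augGraph G o n)) hfmeas
    (fun K x y => hfloc K x y)
    (fun K hK hKn =>
      mem_cl2Finset.2 (twoClique_augGraph_of_subset (mem_cl2Finset.1 hK) (by omega) hKn))
    hK₀
    (fun K hK hKn => ((mem_cl2Finset.1 hK).inter_gball_subset_annulus (by omega) hKn).trans hUK₀)
  refine ⟨f0, hmeas, fun K x y => @hloc K x y, hmap, fun K hK hKsmall x => hpin K hK
    (hKsmall.trans (gball_mono G o (by omega))) (fun hKK₀ _ _ v _ => ?_) x⟩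
  exact hK₀small (hKK₀ ▸ hKsmall) v

open scoped Classical in
/-- If `μ` has a 2-clique factorized density over a finite graph `G`, then its marginal on
the ball `V_n` has a density which factorizes over the 2-cliques of the augmented ball
graph `G_n`, consistently with the original factors on 2-cliques contained in `V_{n-3}`. -/
theorem marginal_twoClique_factorization {V X : Type*} [Fintype V]
    [MeasurableSpace X] [StandardBorelSpace X] [Nonempty X]
    (G : SimpleGraph V) (o : V) (n : ℕ) (hn : 4 ≤ n)
    (θ : V → Measure X) [∀ v, IsProbabilityMeasure (θ v)]
    (f : Finset V → (V → X) → ℝ≥0∞)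
    (hfmeas : ∀ K, Measurable (f K))
    (hfloc : ∀ K, ∀ x y : V → X, (∀ v ∈ K, x v = y v) → f K x = f K y)
    (μ : Measure (V → X)) [IsProbabilityMeasure μ]
    (hμ : μ = (Measure.pi θ).withDensity (fun x => ∏ K ∈ cl2Finset G, f K x)) :
    ∃ f0 : Finset V → (↥(gball G o n) → X) → ℝ≥0∞,
      (∀ K, Measurable (f0 K)) ∧
      (∀ K : Finset V, ∀ x y : ↥(gball G o n) → X,
        (∀ v : ↥(gball G o n), (v : V) ∈ K → x v = y v) → f0 K x = f0 K y) ∧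
      μ.map (fun x (v : ↥(gball G o n)) => x (v : V)) =
        (Measure.pi fun v : ↥(gball G o n) => θ (v : V)).withDensity
          (fun x => ∏ K ∈ cl2Finset (augGraph G o n), f0 K x) ∧
      ∀ K ∈ cl2Finset G, (K : Set V) ⊆ gball G o (n - 3) →
        ∀ x : V → X, f0 K (fun v => x (v : V)) = f K x :=
  marginal_twoClique_factorization_general G o n hn θ f hfmeas hfloc μ hμ
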